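/- arXiv:2601.19200 — 6 statements merged into one kernel-verified Lean document; each statement's English description precedes it below -/
import Mathlib

section
/- Let A be an algebra over a field F of characteristic zero and Ω = {Ω_i}_{i=0}^∞ a higher derivation on A. Then there exists a sequence {δ_n}_{n=1}^∞ of ordinary F-linear derivations on A such that (n+1)·Ω_{n+1} = Σ_{k=0}^n δ_{k+1} ∘ Ω_{n-k} for every n ≥ 0. -/
/-!
Put `δ_0 = 0` and define `δ_n` by the recursion `n • Ω_n = ∑_{k+m=n} δ_k ∘ Ω_m`, which can be
solved for `δ_n` because `Ω_0 = id`; in terms of `Ω(t) = ∑ Ω_n tⁿ` this is `D(t) = t Ω'(t) Ω(t)⁻¹`.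
Apply the recursion to `Ω_n (a b)` in two ways: once to `Ω_n` itself, once to the factors `Ω_i a`,
`Ω_j b` after writing `n = i + j`. Comparing the two triple sums, each `δ_k` with `k < n` is a
derivation by induction, so their terms cancel and only the Leibniz defect of `δ_n` at `(a, b)`
is left, which must vanish.
-/

open Finset

namespace Finset.Nat

variable {M : Type*} [AddCommMonoid M]

theorem sum_antidiagonal_sum_antidiagonal_fst (n : ℕ) (f : ℕ → ℕ → ℕ → M) :
    ∑ p ∈ antidiagonal n, ∑ q ∈ antidiagonal p.1, f q.1 q.2 p.2 =
      ∑ p ∈ antidiagonal n, ∑ q ∈ antidiagonal p.2, f p.1 q.1 q.2 := by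
  simp only [sum_sigma']
  apply sum_nbij' (fun ⟨⟨_, j⟩, ⟨k, l⟩⟩ ↦ ⟨(k, l + j), (l, j)⟩)
    (fun ⟨⟨k, _⟩, ⟨l, j⟩⟩ ↦ ⟨(k + l, j), (k, l)⟩) <;> aesop (add simp [add_assoc])

theorem sum_antidiagonal_sum_antidiagonal_snd (n : ℕ) (f : ℕ → ℕ → ℕ → M) :
    ∑ p ∈ antidiagonal n, ∑ q ∈ antidiagonal p.2, f q.1 p.1 q.2 =
      ∑ p ∈ antidiagonal n, ∑ q ∈ antidiagonal p.2, f p.1 q.1 q.2 := by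
  simp only [sum_sigma']
  apply sum_nbij' (fun ⟨⟨i, _⟩, ⟨k, l⟩⟩ ↦ ⟨(k, i + l), (i, l)⟩)
    (fun ⟨⟨k, _⟩, ⟨i, l⟩⟩ ↦ ⟨(i, k + l), (k, l)⟩) <;>
    aesop (add simp [add_left_comm])

end Finset.Nat

section HigherLogDeriv

variable {R A : Type*} [Semiring R] [Ring A] [Module R A] (Ω : ℕ → A →ₗ[R] A)

noncomputable def higherLogDeriv (n : ℕ) : A →ₗ[R] A :=
  n • Ω n - ∑ k : Fin n, (higherLogDeriv k).comp (Ω (n - k))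

theorem higherLogDeriv_eq (n : ℕ) :
    higherLogDeriv Ω n =
      n • Ω n - ∑ k ∈ range n, (higherLogDeriv Ω k).comp (Ω (n - k)) := by
  rw [higherLogDeriv, Fin.sum_univ_eq_sum_range (fun k ↦ (higherLogDeriv Ω k).comp (Ω (n - k)))]

@[simp]
theorem higherLogDeriv_zero : higherLogDeriv Ω 0 = 0 := by
  rw [higherLogDeriv_eq]
  simp

variable {Ω}

theorem nsmul_eq_sum_higherLogDeriv_comp (h0 : Ω 0 = LinearMap.id) (n : ℕ) :
    n • Ω n = ∑ p ∈ antidiagonal n, (higherLogDeriv Ω p.1).comp (Ω p.2) := by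
  rw [Nat.sum_antidiagonal_eq_sum_range_succ (fun k m ↦ (higherLogDeriv Ω k).comp (Ω m)),
    sum_range_succ, Nat.sub_self, h0, LinearMap.comp_id, higherLogDeriv_eq]
  abel

theorem nsmul_apply_eq_sum_higherLogDeriv (h0 : Ω 0 = LinearMap.id) (n : ℕ) (x : A) :
    n • Ω n x = ∑ p ∈ antidiagonal n, higherLogDeriv Ω p.1 (Ω p.2 x) := by
  simpa using LinearMap.congr_fun (nsmul_eq_sum_higherLogDeriv_comp h0 n) x

theorem nsmul_apply_mul_eq_sum
    (hmul : ∀ n x y, Ω n (x * y) = ∑ p ∈ antidiagonal n, Ω p.1 x * Ω p.2 y) (n : ℕ) (x y : A) :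
    n • Ω n (x * y) =
      ∑ p ∈ antidiagonal n, ((p.1 • Ω p.1 x) * Ω p.2 y + Ω p.1 x * (p.2 • Ω p.2 y)) := by
  rw [hmul, smul_sum]
  refine sum_congr rfl fun p hp ↦ ?_
  rw [← HasAntidiagonal.mem_antidiagonal.mp hp, add_smul, smul_mul_assoc, mul_smul_comm]

theorem sum_sum_higherLogDeriv_apply_mul (h0 : Ω 0 = LinearMap.id)
    (hmul : ∀ n x y, Ω n (x * y) = ∑ p ∈ antidiagonal n, Ω p.1 x * Ω p.2 y) (n : ℕ) (a b : A) :
    ∑ p ∈ antidiagonal n, ∑ q ∈ antidiagonal p.2,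
        higherLogDeriv Ω p.1 (Ω q.1 a * Ω q.2 b) =
      ∑ p ∈ antidiagonal n, ∑ q ∈ antidiagonal p.2,
        (higherLogDeriv Ω p.1 (Ω q.1 a) * Ω q.2 b +
          Ω q.1 a * higherLogDeriv Ω p.1 (Ω q.2 b)) := by
  calc _ = n • Ω n (a * b) := by
          rw [nsmul_apply_eq_sum_higherLogDeriv h0]
          simp only [hmul, map_sum]
    _ = _ := by
          rw [nsmul_apply_mul_eq_sum hmul]
          simp only [nsmul_apply_eq_sum_higherLogDeriv h0, sum_mul, mul_sum, sum_add_distrib,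
            Nat.sum_antidiagonal_sum_antidiagonal_fst n
              (fun k l j ↦ higherLogDeriv Ω k (Ω l a) * Ω j b),
            Nat.sum_antidiagonal_sum_antidiagonal_snd n
              (fun k i l ↦ Ω i a * higherLogDeriv Ω k (Ω l b))]

theorem higherLogDeriv_apply_mul (h0 : Ω 0 = LinearMap.id)
    (hmul : ∀ n x y, Ω n (x * y) = ∑ p ∈ antidiagonal n, Ω p.1 x * Ω p.2 y) (n : ℕ) (a b : A) :
    higherLogDeriv Ω n (a * b) = higherLogDeriv Ω n a * b + a * higherLogDeriv Ω n b := by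
  induction n using Nat.strong_induction_on generalizing a b with
  | _ n ih =>
  have h := sum_sum_higherLogDeriv_apply_mul h0 hmul n a b
  rw [← sub_eq_zero, ← sum_sub_distrib, sum_eq_single (n, 0)] at h
  · simpa [h0, sub_eq_zero] using h
  · rintro ⟨k, m⟩ hp hne
    rw [HasAntidiagonal.mem_antidiagonal] at hp
    have hk : k < n := by
      obtain _ | m := m
      · exact absurd (by rw [← hp]; rfl) hne
      · omega
    rw [← sum_sub_distrib, sum_eq_zero fun q _ ↦ sub_eq_zero.mpr (ih k hk _ _)]
  · simp

end HigherLogDeriv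

theorem stmt_1_general {F A : Type*} [Field F] [Ring A] [Algebra F A]
    (Ω : ℕ → A →ₗ[F] A)
    (h0 : Ω 0 = LinearMap.id)
    (hmul : ∀ k a b, Ω k (a * b) = ∑ i ∈ Finset.range (k + 1), Ω i a * Ω (k - i) b) :
    ∃ δ : ℕ → A →ₗ[F] A,
      (∀ n, 1 ≤ n → ∀ a b : A, δ n (a * b) = δ n a * b + a * δ n b) ∧
      (∀ n : ℕ, (n + 1) • Ω (n + 1) =
        ∑ k ∈ Finset.range (n + 1), (δ (k + 1)).comp (Ω (n - k))) := by
  have hmul' : ∀ n x y, Ω n (x * y) = ∑ p ∈ antidiagonal n, Ω p.1 x * Ω p.2 y :=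
    fun n x y ↦ by rw [hmul, Nat.sum_antidiagonal_eq_sum_range_succ (fun i j ↦ Ω i x * Ω j y)]
  refine ⟨higherLogDeriv Ω, fun n _ ↦ higherLogDeriv_apply_mul h0 hmul' n, fun n ↦ ?_⟩
  rw [nsmul_eq_sum_higherLogDeriv_comp h0, Nat.sum_antidiagonal_succ, higherLogDeriv_zero,
    LinearMap.zero_comp, zero_add,
    Nat.sum_antidiagonal_eq_sum_range_succ (fun k m ↦ (higherLogDeriv Ω (k + 1)).comp (Ω m))]

/-- Any higher derivation `Ω` on an algebra `A` over a field of characteristic zero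
is determined by a sequence of ordinary derivations `δ` via
`(n+1) • Ω (n+1) = ∑_{k=0}^{n} δ (k+1) ∘ Ω (n-k)`. -/
theorem stmt_1 {F A : Type*} [Field F] [CharZero F] [Ring A] [Algebra F A]
    (Ω : ℕ → A →ₗ[F] A)
    (h0 : Ω 0 = LinearMap.id)
    (hmul : ∀ k a b, Ω k (a * b) = ∑ i ∈ Finset.range (k + 1), Ω i a * Ω (k - i) b) :
    ∃ δ : ℕ → A →ₗ[F] A,
      (∀ n, 1 ≤ n → ∀ a b : A, δ n (a * b) = δ n a * b + a * δ n b) ∧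
      (∀ n : ℕ, (n + 1) • Ω (n + 1) =
        ∑ k ∈ Finset.range (n + 1), (δ (k + 1)).comp (Ω (n - k))) :=
  stmt_1_general Ω h0 hmul
end

section
/- Conversely, given a sequence {δ_n}_{n=1}^∞ of ordinary derivations on an algebra A over a field of characteristic zero, the family Ω defined recursively by Ω_0 = id and (n+1)·Ω_{n+1} = Σ_{k=0}^n δ_{k+1} ∘ Ω_{n-k} is a higher derivation on A. -/
/-!
Put `Ω(t) = ∑ Ω_n tⁿ` and `D(t) = ∑ δ_{n+1} tⁿ`; the recursion says `Ω'(t) = D(t) Ω(t)`.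
By induction and the Leibniz rule for each `δ_k`, `(n+1) Ω_{n+1}(ab)` expands into a sum over
triples `k + i + j = n` which regroups as `∑_{i+j=n+1} ((i Ω_i a) Ω_j b + Ω_i a (j Ω_j b))`,
i.e. `(n+1) ∑_{i+j=n+1} Ω_i a Ω_j b`: the coefficientwise product rule `(fg)' = f'g + fg'`.
Since `A` is torsion-free, the factor `n+1` cancels.
-/

open Finset

namespace Finset.Nat

variable {M : Type*} [AddCommMonoid M]

theorem sum_antidiagonal_sum_antidiagonal_assoc (n : ℕ) (f : ℕ → ℕ → ℕ → M) :
    ∑ p ∈ antidiagonal n, ∑ q ∈ antidiagonal p.2, f p.1 q.1 q.2 =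
      ∑ p ∈ antidiagonal n, ∑ q ∈ antidiagonal p.1, f q.1 q.2 p.2 := by
  simp only [sum_sigma']
  refine sum_nbij' (fun x ↦ ⟨(x.1.1 + x.2.1, x.2.2), (x.1.1, x.2.1)⟩)
    (fun x ↦ ⟨(x.2.1, x.2.2 + x.1.2), (x.2.2, x.1.2)⟩) ?_ ?_ ?_ ?_ ?_ <;>
    rintro ⟨⟨_, _⟩, ⟨_, _⟩⟩ <;> simp +contextual <;> omega

theorem sum_antidiagonal_sum_antidiagonal_left_comm (n : ℕ) (f : ℕ → ℕ → ℕ → M) :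
    ∑ p ∈ antidiagonal n, ∑ q ∈ antidiagonal p.2, f p.1 q.1 q.2 =
      ∑ p ∈ antidiagonal n, ∑ q ∈ antidiagonal p.2, f q.1 p.1 q.2 := by
  simp only [sum_sigma']
  refine sum_nbij' (fun x ↦ ⟨(x.2.1, x.1.1 + x.2.2), (x.1.1, x.2.2)⟩)
    (fun x ↦ ⟨(x.2.1, x.1.1 + x.2.2), (x.1.1, x.2.2)⟩) ?_ ?_ ?_ ?_ ?_ <;>
    rintro ⟨⟨_, _⟩, ⟨_, _⟩⟩ <;> simp +contextual <;> omega

theorem nsmul_sum_antidiagonal_mul {A : Type*} [Semiring A] (n : ℕ) (f g : ℕ → A) :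
    n • ∑ p ∈ antidiagonal n, f p.1 * g p.2 =
      ∑ p ∈ antidiagonal n, ((p.1 • f p.1) * g p.2 + f p.1 * (p.2 • g p.2)) := by
  rw [smul_sum]
  refine sum_congr rfl fun p hp ↦ ?_
  rw [smul_mul_assoc, mul_smul_comm, ← add_smul, mem_antidiagonal.mp hp]

end Finset.Nat

open Finset.Nat in
theorem apply_mul_eq_sum_antidiagonal_of_succ_nsmul_eq {A : Type*} [Semiring A] [IsAddTorsionFree A]
    (d : ℕ → A →+ A) (Ω : ℕ → A → A)
    (hd : ∀ n a b, d n (a * b) = d n a * b + a * d n b) (h0 : ∀ a, Ω 0 a = a)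
    (hrec : ∀ n a, (n + 1) • Ω (n + 1) a = ∑ p ∈ antidiagonal n, d p.1 (Ω p.2 a))
    (n : ℕ) (a b : A) :
    Ω n (a * b) = ∑ p ∈ antidiagonal n, Ω p.1 a * Ω p.2 b := by
  induction n using Nat.strong_induction_on with
  | _ n ih =>
  cases n with
  | zero => simp [h0]
  | succ n =>
  have left : ∑ p ∈ antidiagonal n, ∑ q ∈ antidiagonal p.2, d p.1 (Ω q.1 a) * Ω q.2 b =
      ∑ p ∈ antidiagonal n, ((p.1 + 1) • Ω (p.1 + 1) a) * Ω p.2 b := by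
    rw [sum_antidiagonal_sum_antidiagonal_assoc n fun k i j ↦ d k (Ω i a) * Ω j b]
    simp only [hrec, sum_mul]
  have right : ∑ p ∈ antidiagonal n, ∑ q ∈ antidiagonal p.2, Ω q.1 a * d p.1 (Ω q.2 b) =
      ∑ p ∈ antidiagonal n, Ω p.1 a * ((p.2 + 1) • Ω (p.2 + 1) b) := by
    rw [sum_antidiagonal_sum_antidiagonal_left_comm n fun k i j ↦ Ω i a * d k (Ω j b)]
    simp only [hrec, mul_sum]
  refine nsmul_right_injective n.succ_ne_zero ?_
  calc (n + 1) • Ω (n + 1) (a * b)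
      = ∑ p ∈ antidiagonal n, ∑ q ∈ antidiagonal p.2,
          (d p.1 (Ω q.1 a) * Ω q.2 b + Ω q.1 a * d p.1 (Ω q.2 b)) := by
        rw [hrec]
        refine sum_congr rfl fun p hp ↦ ?_
        rw [ih p.2 (antidiagonal.snd_lt hp), map_sum]
        simp only [hd]
    _ = ∑ p ∈ antidiagonal (n + 1), ((p.1 • Ω p.1 a) * Ω p.2 b + Ω p.1 a * (p.2 • Ω p.2 b)) := by
        rw [sum_add_distrib, sum_antidiagonal_succ, sum_antidiagonal_succ']
        simp only [sum_add_distrib, left, right, zero_smul, zero_mul, mul_zero, zero_add]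
    _ = (n + 1) • ∑ p ∈ antidiagonal (n + 1), Ω p.1 a * Ω p.2 b :=
        (nsmul_sum_antidiagonal_mul (n + 1) (Ω · a) (Ω · b)).symm

/-- Conversely, given a sequence `δ` of ordinary derivations on an algebra over a field of
characteristic zero, the family `Ω` defined recursively by `Ω 0 = id` and
`(n+1) • Ω (n+1) = ∑_{k=0}^{n} δ (k+1) ∘ Ω (n-k)` is a higher derivation. -/
theorem stmt_2 {F A : Type*} [Field F] [CharZero F] [Ring A] [Algebra F A]
    (δ : ℕ → A →ₗ[F] A)
    (hδ : ∀ n, 1 ≤ n → ∀ a b : A, δ n (a * b) = δ n a * b + a * δ n b)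
    (Ω : ℕ → A →ₗ[F] A)
    (h0 : Ω 0 = LinearMap.id)
    (hrec : ∀ n : ℕ, (n + 1) • Ω (n + 1) =
      ∑ k ∈ Finset.range (n + 1), (δ (k + 1)).comp (Ω (n - k))) :
    ∀ k : ℕ, ∀ a b : A, Ω k (a * b) = ∑ i ∈ Finset.range (k + 1), Ω i a * Ω (k - i) b := by
  have : IsAddTorsionFree A := .of_isTorsionFree F A
  intro k a b
  rw [← Nat.sum_antidiagonal_eq_sum_range_succ fun i j ↦ Ω i a * Ω j b]
  refine apply_mul_eq_sum_antidiagonal_of_succ_nsmul_eq (fun k ↦ (δ (k + 1)).toAddMonoidHom) (fun k ↦ ⇑(Ω k))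
    (fun k ↦ hδ (k + 1) k.succ_pos) (by simp [h0]) (fun n x ↦ ?_) k a b
  rw [← LinearMap.smul_apply, hrec, Nat.sum_antidiagonal_eq_sum_range_succ fun i j ↦
    (δ (i + 1)).toAddMonoidHom (Ω j x)]
  simp
end

section
/- Let (T, θ, ζ) be an additive monad on a preadditive category 𝒞 and δ := θ∘(μ_T − Tμ) for a natural transformation μ : 1_𝒞 → T. Define Δ_0 = id_T, Δ_1 = δ, and Δ_n = θ ∘ μ_T ∘ Δ_{n-1} for n ≥ 2. Then Δ = {Δ_n}_{n≥0} is a higher derivation on T, i.e. Δ_n ∘ θ = θ ∘ Σ_{k=0}^n Δ_k ∗ Δ_{n-k} for all n ≥ 0. -/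
/-!
Put `ε = θ ∘ u_T`, so that `δ = ε − θ ∘ Tu` and `Δ_n = ε^(n-1) ∘ δ` for `n ≥ 1`. Naturality of `u`
and associativity of `θ` give `ε ∘ θ = θ ∘ ε_T` and `θ ∘ ε_T = θ ∘ (Tε + δ_T)`; together with
naturality of `θ` these yield the Leibniz rule for `δ`, which is the case `n = 1`. For the step
`n → n + 1`, compose the identity for `n` with `ε` and move it past `θ`: then
`ε_T ∘ (Δ_k ∗ Δ_(n-k)) = Δ_(k+1) ∗ Δ_(n-k)` for `k ≥ 1`, while after `θ` the term `k = 0` splits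
into `Δ_0 ∗ Δ_(n+1) + Δ_1 ∗ Δ_n`.
-/

open CategoryTheory Finset Finset.Nat Category Preadditive

namespace CategoryTheory.Monad

variable {C : Type*} [Category C] (T : Monad C) (u : 𝟭 C ⟶ T.toFunctor)

def unitMul (M : C) : T.obj M ⟶ T.obj M := u.app (T.obj M) ≫ T.μ.app M

def mulUnit (M : C) : T.obj M ⟶ T.obj M := T.map (u.app M) ≫ T.μ.app M

theorem mu_app_comp_unitMul (M : C) :
    T.μ.app M ≫ T.unitMul u M = T.unitMul u (T.obj M) ≫ T.μ.app M := by
  have hu : T.μ.app M ≫ u.app (T.obj M) = u.app (T.obj (T.obj M)) ≫ T.map (T.μ.app M) :=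
    u.naturality (T.μ.app M)
  rw [unitMul, reassoc_of% hu, T.assoc, unitMul, Category.assoc]

theorem mu_app_comp_mulUnit (M : C) :
    T.μ.app M ≫ T.mulUnit u M = T.map (T.mulUnit u M) ≫ T.μ.app M := by
  rw [mulUnit, ← T.mu_naturality_assoc, Functor.map_comp, Category.assoc, T.assoc]

theorem mulUnit_obj_comp_mu_app (M : C) :
    T.mulUnit u (T.obj M) ≫ T.μ.app M = T.map (T.unitMul u M) ≫ T.μ.app M := by
  rw [mulUnit, unitMul, Functor.map_comp, Category.assoc, Category.assoc, T.assoc]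

variable [Preadditive C]

def innerDerivation (M : C) : T.obj M ⟶ T.obj M := T.unitMul u M - T.mulUnit u M

theorem unitMul_obj_comp_mu_app (M : C) :
    T.unitMul u (T.obj M) ≫ T.μ.app M =
      (T.map (T.unitMul u M) + T.innerDerivation u (T.obj M)) ≫ T.μ.app M := by
  rw [innerDerivation, add_comp, sub_comp, mulUnit_obj_comp_mu_app]
  abel

theorem mu_app_comp_innerDerivation [T.Additive] (M : C) :
    T.μ.app M ≫ T.innerDerivation u M =
      (T.map (T.innerDerivation u M) + T.innerDerivation u (T.obj M)) ≫ T.μ.app M := by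
  rw [innerDerivation, comp_sub, mu_app_comp_unitMul, mu_app_comp_mulUnit,
    unitMul_obj_comp_mu_app, Functor.map_sub, add_comp, add_comp, sub_comp]
  abel

/-- The component at `M` of `∑_{k+l=n} Δ_k ∗ Δ_l`, where `(Δ_k ∗ Δ_l)_M = Δ_k(TM) ∘ T(Δ_l M)`. -/
def leibnizSum (Δ : ℕ → ∀ M : C, T.obj M ⟶ T.obj M) (n : ℕ) (M : C) :
    T.obj (T.obj M) ⟶ T.obj (T.obj M) :=
  ∑ p ∈ antidiagonal n, T.map (Δ p.2 M) ≫ Δ p.1 (T.obj M)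

variable {T}

theorem leibnizSum_add_two_comp_mu_app (Δ : ℕ → ∀ M : C, T.obj M ⟶ T.obj M)
    (h0 : ∀ M, Δ 0 M = 𝟙 _) (h1 : ∀ M, Δ 1 M = T.innerDerivation u M)
    (hsucc : ∀ n M, Δ (n + 2) M = Δ (n + 1) M ≫ T.unitMul u M) (m : ℕ) (M : C) :
    T.leibnizSum Δ (m + 2) M ≫ T.μ.app M =
      T.leibnizSum Δ (m + 1) M ≫ T.unitMul u (T.obj M) ≫ T.μ.app M := by
  set R := ∑ p ∈ antidiagonal m, T.map (Δ p.2 M) ≫ Δ (p.1 + 1) (T.obj M)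
  have hL1 : T.leibnizSum Δ (m + 1) M = T.map (Δ (m + 1) M) + R := by
    rw [leibnizSum, sum_antidiagonal_succ, h0, comp_id]
  have hL2 : T.leibnizSum Δ (m + 2) M = T.map (Δ (m + 1) M ≫ T.unitMul u M) +
      (T.map (Δ (m + 1) M) ≫ T.innerDerivation u (T.obj M) + R ≫ T.unitMul u (T.obj M)) := by
    simp only [leibnizSum, sum_antidiagonal_succ, h0, h1, hsucc, comp_id, R,
      Preadditive.sum_comp, Category.assoc]
  rw [hL1, hL2]
  simp only [Functor.map_comp, add_comp, comp_add, Category.assoc, unitMul_obj_comp_mu_app]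
  abel

theorem mu_app_comp_eq_leibnizSum_comp_mu_app [T.Additive] (Δ : ℕ → ∀ M : C, T.obj M ⟶ T.obj M)
    (h0 : ∀ M, Δ 0 M = 𝟙 _) (h1 : ∀ M, Δ 1 M = T.innerDerivation u M)
    (hsucc : ∀ n M, Δ (n + 2) M = Δ (n + 1) M ≫ T.unitMul u M) (n : ℕ) (M : C) :
    T.μ.app M ≫ Δ n M = T.leibnizSum Δ n M ≫ T.μ.app M := by
  induction n with
  | zero => simp [leibnizSum, h0]
  | succ n ih =>
    cases n with
    | zero =>
      rw [h1, mu_app_comp_innerDerivation, leibnizSum, sum_antidiagonal_succ, antidiagonal_zero,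
        sum_singleton, h0, h0, h1, h1, comp_id, Functor.map_id, id_comp]
    | succ m =>
      rw [hsucc, reassoc_of% ih, mu_app_comp_unitMul,
        leibnizSum_add_two_comp_mu_app u Δ h0 h1 hsucc]

end CategoryTheory.Monad

/-- With `δ = θ∘(u_T − Tu)`, the family `Δ 0 = id`, `Δ 1 = δ`, `Δ n = θ ∘ u_T ∘ Δ (n-1)`
(`n ≥ 2`) is a higher derivation on the monad `T`:
`Δ n ∘ θ = θ ∘ ∑_{k=0}^n Δ k ∗ Δ (n-k)` for all `n ≥ 0`. -/
theorem stmt_11 {C : Type*} [Category C] [Preadditive C]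
    (T : Monad C) [T.toFunctor.Additive]
    (u : 𝟭 C ⟶ T.toFunctor)
    (uT Tu : ∀ M : C, T.obj M ⟶ T.obj (T.obj M))
    (huT : ∀ M : C, uT M = u.app (T.obj M))
    (hTu : ∀ M : C, Tu M = T.map (u.app M))
    (Δ : ℕ → (T.toFunctor ⟶ T.toFunctor))
    (hΔ0 : Δ 0 = 𝟙 T.toFunctor)
    (hΔ1 : ∀ M : C, (Δ 1).app M = (uT M - Tu M) ≫ T.μ.app M)
    (hΔn : ∀ n : ℕ, 2 ≤ n → ∀ M : C,
      (Δ n).app M = (Δ (n - 1)).app M ≫ uT M ≫ T.μ.app M) :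
    ∀ (n : ℕ) (M : C), T.μ.app M ≫ (Δ n).app M =
      (∑ k ∈ Finset.range (n + 1),
        T.map ((Δ (n - k)).app M) ≫ (Δ k).app (T.obj M)) ≫ T.μ.app M := by
  obtain rfl : uT = fun M => u.app (T.obj M) := funext huT
  obtain rfl : Tu = fun M => T.map (u.app M) := funext hTu
  have h0 (M : C) : (Δ 0).app M = 𝟙 _ := by rw [hΔ0, NatTrans.id_app]
  have h1 (M : C) : (Δ 1).app M = T.innerDerivation u M := by
    rw [hΔ1, sub_comp]
    rfl
  have hsucc (n : ℕ) (M : C) : (Δ (n + 2)).app M = (Δ (n + 1)).app M ≫ T.unitMul u M :=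
    hΔn (n + 2) le_add_self M
  intro n M
  rw [Monad.mu_app_comp_eq_leibnizSum_comp_mu_app u (fun n => (Δ n).app) h0 h1 hsucc,
    Monad.leibnizSum,
    sum_antidiagonal_eq_sum_range_succ fun k l => T.map ((Δ l).app M) ≫ (Δ k).app (T.obj M)]
end

section
/- In the setting of the previous higher derivation Δ_n = θ∘μ_T∘Δ_{n-1} on a monad T, for every T-module (M,f_M) the maps D_0 = id_M, D_n = (f_M ∘ μ_M)^n for n ≥ 1 form a higher Δ-derivation on M, i.e. D_n ∘ f_M = f_M ∘ (Σ_{k=0}^n T(D_k) ∘ (Δ_{n-k})_M) for all n ≥ 0. -/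
/-!
Induction on `n`, writing `e = u_M ≫ a` so that `D (n + 1) = D n ≫ e`. Since
`Δ (n + 1 - k) = Δ (n - k) ≫ u_T ≫ μ` for `k < n` and `Δ 1 = Δ 0 ≫ u_T ≫ μ - T u ≫ μ`, the
`(n + 1)`-st sum is the `n`-th one followed by `u_T ≫ μ`, plus `T (D (n + 1))`, minus `T u ≫ μ ≫ T (D n)`.
After composing with `a`, associativity of the algebra and naturality of `μ` and `u` turn
`u_T ≫ μ ≫ T g ≫ a` into `T g ≫ a ≫ e`, which reduces the first part to `a ≫ D n ≫ e`, and turn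
`T u ≫ μ ≫ T (D n) ≫ a` into `T (D n ≫ e) ≫ a`, which cancels the new top term.
-/

open CategoryTheory Finset

namespace CategoryTheory.Monad.Algebra

variable {C : Type*} [Category C] {T : Monad C} (A : T.Algebra)

lemma μ_app_map_comp_a {X : C} (g : X ⟶ A.A) :
    T.μ.app X ≫ T.map g ≫ A.a = T.map (T.map g ≫ A.a) ≫ A.a := by
  rw [← T.μ.naturality_assoc, A.assoc, Functor.map_comp_assoc]
  rfl

lemma app_obj_μ_app_map_comp_a (u : 𝟭 C ⟶ T.toFunctor) {X : C} (g : X ⟶ A.A) :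
    u.app (T.obj X) ≫ T.μ.app X ≫ T.map g ≫ A.a = (T.map g ≫ A.a) ≫ u.app A.A ≫ A.a := by
  rw [μ_app_map_comp_a, ← u.naturality_assoc]
  rfl

lemma map_app_μ_app_map_comp_a (u : 𝟭 C ⟶ T.toFunctor) {X : C} (g : X ⟶ A.A) :
    T.map (u.app X) ≫ T.μ.app X ≫ T.map g ≫ A.a = T.map (g ≫ u.app A.A ≫ A.a) ≫ A.a := by
  rw [μ_app_map_comp_a, ← Functor.map_comp_assoc, ← u.naturality_assoc]
  rfl

end CategoryTheory.Monad.Algebra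

namespace CategoryTheory.Preadditive

variable {C : Type*} [Category C] [Preadditive C] {Z W : C}

lemma sum_range_add_two_comp_eq {δ : ℕ → (Z ⟶ Z)} {ν τ : Z ⟶ Z} (hδ0 : δ 0 = 𝟙 Z)
    (hδ1 : δ 1 = ν - τ) (hδ : ∀ m, 2 ≤ m → δ m = δ (m - 1) ≫ ν) (f : ℕ → (Z ⟶ W)) (n : ℕ) :
    ∑ k ∈ range (n + 2), δ (n + 1 - k) ≫ f k =
      ∑ k ∈ range (n + 1), δ (n - k) ≫ ν ≫ f k - τ ≫ f n + f (n + 1) := by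
  have hlt : ∀ k ∈ range n, δ (n + 1 - k) ≫ f k = δ (n - k) ≫ ν ≫ f k := by
    intro k hk
    have hk : k < n := mem_range.mp hk
    rw [hδ _ (by omega), show n + 1 - k - 1 = n - k by omega, Category.assoc]
  rw [sum_range_succ, sum_range_succ, sum_range_succ, sum_congr rfl hlt,
    show n + 1 - n = 1 by omega, Nat.sub_self, Nat.sub_self, hδ0, hδ1, sub_comp]
  simp only [Category.id_comp]
  abel

end CategoryTheory.Preadditive

theorem stmt_12_general {C : Type*} [Category C] [Preadditive C]
    (T : Monad C)
    (u : 𝟭 C ⟶ T.toFunctor)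
    (uT Tu : ∀ M : C, T.obj M ⟶ T.obj (T.obj M))
    (huT : ∀ M : C, uT M = u.app (T.obj M))
    (hTu : ∀ M : C, Tu M = T.map (u.app M))
    (Δ : ℕ → (T.toFunctor ⟶ T.toFunctor))
    (hΔ0 : Δ 0 = 𝟙 T.toFunctor)
    (hΔ1 : ∀ M : C, (Δ 1).app M = (uT M - Tu M) ≫ T.μ.app M)
    (hΔn : ∀ n : ℕ, 2 ≤ n → ∀ M : C,
      (Δ n).app M = (Δ (n - 1)).app M ≫ uT M ≫ T.μ.app M)
    (alg : T.Algebra)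
    (uM : alg.A ⟶ T.obj alg.A) (huM : uM = u.app alg.A)
    (D : ℕ → (alg.A ⟶ alg.A))
    (hD0 : D 0 = 𝟙 alg.A)
    (hDs : ∀ n : ℕ, D (n + 1) = D n ≫ (uM ≫ alg.a)) :
    ∀ n : ℕ, alg.a ≫ D n =
      (∑ k ∈ Finset.range (n + 1),
        (Δ (n - k)).app alg.A ≫ T.map (D k)) ≫ alg.a := by
  subst huM
  have hsum := Preadditive.sum_range_add_two_comp_eq (congrArg (·.app alg.A) hΔ0)
    (by rw [hΔ1, Preadditive.sub_comp]) (fun m hm => hΔn m hm alg.A)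
    (fun k => T.map (D k))
  intro n
  induction n with
  | zero => simp [hD0, hΔ0]
  | succ n ih =>
    have hcorr : T.map (u.app alg.A) ≫ T.μ.app alg.A ≫ T.map (D n) ≫ alg.a =
        T.map (D (n + 1)) ≫ alg.a := by
      rw [alg.map_app_μ_app_map_comp_a, hDs]
    have hterm : ∀ k, (Δ (n - k)).app alg.A ≫ uT alg.A ≫ T.μ.app alg.A ≫ T.map (D k) ≫ alg.a =
        (((Δ (n - k)).app alg.A ≫ T.map (D k)) ≫ alg.a) ≫ u.app alg.A ≫ alg.a := by
      intro k
      rw [huT, alg.app_obj_μ_app_map_comp_a]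
      simp only [Category.assoc]
    rw [hsum, Preadditive.add_comp, Preadditive.sub_comp, Preadditive.sum_comp, hTu]
    simp only [Category.assoc, hcorr, sub_add_cancel]
    rw [sum_congr rfl fun k _ => hterm k, ← Preadditive.sum_comp,
      ← Preadditive.sum_comp, ← ih, hDs, Category.assoc]

/-- For the higher derivation `Δ n = θ∘u_T∘Δ (n-1)` on a monad `T` and any `T`-module
`(M, f_M)`, the maps `D 0 = id`, `D n = (f_M ∘ u_M)^n` form a higher `Δ`-derivation on `M`:
`D n ∘ f_M = f_M ∘ (∑_{k=0}^n T(D k) ∘ (Δ (n-k))_M)` for all `n ≥ 0`. -/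
theorem stmt_12 {C : Type*} [Category C] [Preadditive C]
    (T : Monad C) [T.toFunctor.Additive]
    (u : 𝟭 C ⟶ T.toFunctor)
    (uT Tu : ∀ M : C, T.obj M ⟶ T.obj (T.obj M))
    (huT : ∀ M : C, uT M = u.app (T.obj M))
    (hTu : ∀ M : C, Tu M = T.map (u.app M))
    (Δ : ℕ → (T.toFunctor ⟶ T.toFunctor))
    (hΔ0 : Δ 0 = 𝟙 T.toFunctor)
    (hΔ1 : ∀ M : C, (Δ 1).app M = (uT M - Tu M) ≫ T.μ.app M)
    (hΔn : ∀ n : ℕ, 2 ≤ n → ∀ M : C,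
      (Δ n).app M = (Δ (n - 1)).app M ≫ uT M ≫ T.μ.app M)
    (alg : T.Algebra)
    (uM : alg.A ⟶ T.obj alg.A) (huM : uM = u.app alg.A)
    (D : ℕ → (alg.A ⟶ alg.A))
    (hD0 : D 0 = 𝟙 alg.A)
    (hDs : ∀ n : ℕ, D (n + 1) = D n ≫ (uM ≫ alg.a)) :
    ∀ n : ℕ, alg.a ≫ D n =
      (∑ k ∈ Finset.range (n + 1),
        (Δ (n - k)).app alg.A ≫ T.map (D k)) ≫ alg.a :=
  stmt_12_general T u uT Tu huT hTu Δ hΔ0 hΔ1 hΔn alg uM huM D hD0 hDs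
end

section
/- Let Ω be a higher derivation of order n on a ring A and let ℒ be a Gabriel filter of left ideals of A corresponding to a hereditary torsion theory τ. Suppose ℒ is Ω-invariant of order n, i.e. for every I ∈ ℒ there exists J ∈ ℒ with Ω_i(J) ⊆ I for all 0 ≤ i ≤ n. Then for every A-module M and every higher Ω-derivation Ψ of order n on M, Ψ_i(τ(M)) ⊆ τ(M) for all 0 ≤ i ≤ n. -/
/-- Annihilator of an element as a left ideal. -/
def annIdeal (A : Type*) [Ring A] {M : Type*} [AddCommGroup M] [Module A M] (m : M) :
    Submodule A A :=
  LinearMap.ker (LinearMap.toSpanSingleton A M m)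

/-- Left quotient ideal `(I : a) = {x | x • a ∈ I}`. -/
def leftColon {A : Type*} [Ring A] (I : Submodule A A) (a : A) : Submodule A A :=
  Submodule.comap (LinearMap.toSpanSingleton A A a) I

/-! The torsion submodule `τ(M) = {m | Ann m ∈ ℒ}` is recovered from the Gabriel condition: `z ∈ τ(M)`
as soon as `x • z ∈ τ(M)` for all `x` in some `J ∈ ℒ`. Take `J ∈ ℒ` with `Ω_i(J) ⊆ Ann m` for all
`i ≤ n`. For `x ∈ J` we have `x • m = 0`, so the Leibniz rule for `Ψ_k (x • m) = 0` expresses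
`x • Ψ_k m` as a combination of the `Ψ_j m` with `j < k`, which are torsion by strong induction. -/

section Colon

variable {A M : Type*} [Ring A] [AddCommGroup M] [Module A M]

theorem mem_annIdeal {m : M} {a : A} : a ∈ annIdeal A m ↔ a • m = 0 := Iff.rfl

theorem mem_leftColon {I : Submodule A A} {a y : A} : y ∈ leftColon I a ↔ y * a ∈ I := Iff.rfl

theorem leftColon_annIdeal (m : M) (a : A) :
    leftColon (annIdeal A m) a = annIdeal A (a • m) := by
  ext y
  rw [mem_leftColon, mem_annIdeal, mem_annIdeal, mul_smul]

end Colon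

structure IsGabrielFilter {A : Type*} [Ring A] (ℒ : Set (Submodule A A)) : Prop where
  top_mem : ⊤ ∈ ℒ
  mem_of_le : ∀ I ∈ ℒ, ∀ J : Submodule A A, I ≤ J → J ∈ ℒ
  leftColon_mem : ∀ I ∈ ℒ, ∀ a : A, leftColon I a ∈ ℒ
  mem_of_leftColon_mem : ∀ I : Submodule A A, (∃ J ∈ ℒ, ∀ a ∈ J, leftColon I a ∈ ℒ) → I ∈ ℒ

namespace IsGabrielFilter

variable {A : Type*} [Ring A] {ℒ : Set (Submodule A A)} (hℒ : IsGabrielFilter ℒ)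
include hℒ

theorem inf_mem {I J : Submodule A A} (hI : I ∈ ℒ) (hJ : J ∈ ℒ) : I ⊓ J ∈ ℒ := by
  refine hℒ.mem_of_leftColon_mem _ ⟨J, hJ, fun a ha => ?_⟩
  refine hℒ.mem_of_le _ (hℒ.leftColon_mem I hI a) _ fun y hy => ?_
  exact mem_leftColon.2 ⟨mem_leftColon.1 hy, J.smul_mem y ha⟩

variable (M : Type*) [AddCommGroup M] [Module A M]

def torsion : Submodule A M where
  carrier := {m | annIdeal A m ∈ ℒ}
  zero_mem' := by
    have : annIdeal A (0 : M) = ⊤ := by ext a; simp [mem_annIdeal]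
    simpa [this] using hℒ.top_mem
  add_mem' {z w} hz hw := by
    refine hℒ.mem_of_le _ (hℒ.inf_mem hz hw) _ fun a ⟨haz, haw⟩ => ?_
    rw [mem_annIdeal, smul_add, mem_annIdeal.1 haz, mem_annIdeal.1 haw, add_zero]
  smul_mem' a z hz := by
    show annIdeal A (a • z) ∈ ℒ
    rw [← leftColon_annIdeal]
    exact hℒ.leftColon_mem _ hz a

variable {M}

theorem mem_torsion_of_smul_mem {z : M} {J : Submodule A A} (hJ : J ∈ ℒ)
    (h : ∀ x ∈ J, x • z ∈ hℒ.torsion M) : z ∈ hℒ.torsion M :=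
  hℒ.mem_of_leftColon_mem _ ⟨J, hJ, fun x hx => leftColon_annIdeal z x ▸ h x hx⟩

end IsGabrielFilter

section HigherDerivation

variable {A M : Type*} [Ring A] [AddCommGroup M] [Module A M]

theorem smul_eq_neg_sum_of_smul_eq_zero {Ω : ℕ → A → A} (hΩ0 : ∀ a, Ω 0 a = a)
    {Ψ : ℕ → M → M} (hΨzero : ∀ k, Ψ k 0 = 0) {k : ℕ}
    (hΨ : ∀ (a : A) (m : M), Ψ k (a • m) = ∑ i ∈ Finset.range (k + 1), Ω i a • Ψ (k - i) m)
    {x : A} {m : M} (hxm : x • m = 0) :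
    x • Ψ k m = -∑ i ∈ Finset.range k, Ω (i + 1) x • Ψ (k - (i + 1)) m := by
  have h := hΨ x m
  rw [hxm, hΨzero, Finset.sum_range_succ', hΩ0, Nat.sub_zero] at h
  exact eq_neg_of_add_eq_zero_right h.symm

theorem IsGabrielFilter.apply_mem_torsion {ℒ : Set (Submodule A A)} (hℒ : IsGabrielFilter ℒ)
    {n : ℕ} {Ω : ℕ → A → A} (hΩ0 : ∀ a, Ω 0 a = a)
    (hinv : ∀ I ∈ ℒ, ∃ J ∈ ℒ, ∀ i ≤ n, ∀ x ∈ J, Ω i x ∈ I)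
    {Ψ : ℕ → M → M} (hΨzero : ∀ k, Ψ k 0 = 0)
    (hΨ : ∀ k ≤ n, ∀ (a : A) (m : M),
      Ψ k (a • m) = ∑ i ∈ Finset.range (k + 1), Ω i a • Ψ (k - i) m)
    {m : M} (hm : m ∈ hℒ.torsion M) {k : ℕ} (hk : k ≤ n) : Ψ k m ∈ hℒ.torsion M := by
  induction k using Nat.strong_induction_on with
  | _ k IH =>
    obtain ⟨J, hJ, hJΩ⟩ := hinv _ hm
    refine hℒ.mem_torsion_of_smul_mem hJ fun x hx => ?_
    have hxm : x • m = 0 := mem_annIdeal.1 (hΩ0 x ▸ hJΩ 0 n.zero_le x hx)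
    rw [smul_eq_neg_sum_of_smul_eq_zero hΩ0 hΨzero (hΨ k hk) hxm]
    refine neg_mem (Submodule.sum_mem _ fun i hi => Submodule.smul_mem _ _ (IH _ ?_ ?_)) <;>
      grind

end HigherDerivation

theorem stmt_15_general {A M : Type*} [Ring A] [AddCommGroup M] [Module A M] (n : ℕ)
    (ℒ : Set (Submodule A A))
    (hTop : (⊤ : Submodule A A) ∈ ℒ)
    (hUp : ∀ I ∈ ℒ, ∀ J : Submodule A A, I ≤ J → J ∈ ℒ)
    (hColon : ∀ I ∈ ℒ, ∀ a : A, leftColon I a ∈ ℒ)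
    (hGab : ∀ I : Submodule A A, (∃ J ∈ ℒ, ∀ a ∈ J, leftColon I a ∈ ℒ) → I ∈ ℒ)
    (Ω : ℕ → A → A)
    (hΩ0 : ∀ a, Ω 0 a = a)
    (hinv : ∀ I ∈ ℒ, ∃ J ∈ ℒ, ∀ i ≤ n, ∀ x ∈ J, Ω i x ∈ I)
    (Ψ : ℕ → M → M)
    (hΨadd : ∀ k m m', Ψ k (m + m') = Ψ k m + Ψ k m')
    (hΨ : ∀ k ≤ n, ∀ (a : A) (m : M),
      Ψ k (a • m) = ∑ i ∈ Finset.range (k + 1), Ω i a • Ψ (k - i) m) :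
    ∀ i ≤ n, ∀ m : M, annIdeal A m ∈ ℒ → annIdeal A (Ψ i m) ∈ ℒ := by
  have hℒ : IsGabrielFilter ℒ := ⟨hTop, hUp, hColon, hGab⟩
  have hΨzero : ∀ k, Ψ k 0 = 0 := fun k => by simpa using hΨadd k 0 0
  intro i hi m hm
  exact hℒ.apply_mem_torsion hΩ0 hinv hΨzero hΨ hm hi

/-- If the Gabriel filter `ℒ` of the hereditary torsion theory `τ` is `Ω`-invariant of order
`n`, then every higher `Ω`-derivation `Ψ` of order `n` on every `A`-module `M` preserves the
torsion submodule: `Ψ i (τ(M)) ⊆ τ(M)` for all `0 ≤ i ≤ n`. -/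
theorem stmt_15 {A M : Type*} [Ring A] [AddCommGroup M] [Module A M] (n : ℕ)
    (ℒ : Set (Submodule A A))
    (hTop : (⊤ : Submodule A A) ∈ ℒ)
    (hUp : ∀ I ∈ ℒ, ∀ J : Submodule A A, I ≤ J → J ∈ ℒ)
    (hColon : ∀ I ∈ ℒ, ∀ a : A, leftColon I a ∈ ℒ)
    (hGab : ∀ I : Submodule A A, (∃ J ∈ ℒ, ∀ a ∈ J, leftColon I a ∈ ℒ) → I ∈ ℒ)
    (Ω : ℕ → A → A)
    (hΩadd : ∀ k a b, Ω k (a + b) = Ω k a + Ω k b)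
    (hΩ0 : ∀ a, Ω 0 a = a)
    (hΩmul : ∀ k ≤ n, ∀ a b : A,
      Ω k (a * b) = ∑ i ∈ Finset.range (k + 1), Ω i a * Ω (k - i) b)
    (hinv : ∀ I ∈ ℒ, ∃ J ∈ ℒ, ∀ i ≤ n, ∀ x ∈ J, Ω i x ∈ I)
    (Ψ : ℕ → M → M)
    (hΨadd : ∀ k m m', Ψ k (m + m') = Ψ k m + Ψ k m')
    (hΨ0 : ∀ m, Ψ 0 m = m)
    (hΨ : ∀ k ≤ n, ∀ (a : A) (m : M),
      Ψ k (a • m) = ∑ i ∈ Finset.range (k + 1), Ω i a • Ψ (k - i) m) :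
    ∀ i ≤ n, ∀ m : M, annIdeal A m ∈ ℒ → annIdeal A (Ψ i m) ∈ ℒ :=
  stmt_15_general n ℒ hTop hUp hColon hGab Ω hΩ0 hinv Ψ hΨadd hΨ
end

section
/- Let τ be a hereditary torsion theory on left A-modules and M a τ-torsion-free A-module with localization map Φ_M : M → Q_τ(M) into the module of quotients. If Ψ and Ψ' are two higher Ω-derivations of order n on Q_τ(M) that both extend a given higher Ω-derivation D on M (i.e. Ψ_k ∘ Φ_M = Φ_M ∘ D_k = Ψ'_k ∘ Φ_M for all k), then Ψ_k = Ψ'_k for all 0 ≤ k ≤ n. -/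
/-!
Both `Ψ_k` and `Ψ'_k` send `Φ_M(M)` to the same place, so by strong induction on `k` and the
Leibniz rule, `a • (Ψ_k q - Ψ'_k q) = Ψ_k (a • q) - Ψ'_k (a • q) = 0` whenever `a • q ∈ Φ_M(M)`.
The annihilator of `Ψ_k q - Ψ'_k q` therefore contains an ideal of the Gabriel filter, and the
difference vanishes because `Q_τ(M)` is τ-torsion-free.
-/

section

variable {A Q : Type*} [Ring A] [AddCommGroup Q] [Module A Q]

theorem eq_of_smul_eq_of_mem {ℒ : Set (Submodule A A)}
    (hUp : ∀ I ∈ ℒ, ∀ J : Submodule A A, I ≤ J → J ∈ ℒ)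
    (hQtf : ∀ q : Q, annIdeal A q ∈ ℒ → q = 0)
    {I : Submodule A A} (hI : I ∈ ℒ) {x y : Q} (h : ∀ a ∈ I, a • x = a • y) : x = y := by
  rw [← sub_eq_zero]
  refine hQtf _ (hUp I hI _ fun a ha => ?_)
  simp only [annIdeal, LinearMap.mem_ker, LinearMap.toSpanSingleton_apply, smul_sub,
    sub_eq_zero]
  exact h a ha

theorem smul_eq_smul_of_leibniz (Ω : ℕ → A → A) {Ψ Ψ' : ℕ → Q → Q} {k : ℕ} {a : A}
    (hΩ0 : Ω 0 a = a) {q : Q}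
    (hΨ : Ψ k (a • q) = ∑ i ∈ Finset.range (k + 1), Ω i a • Ψ (k - i) q)
    (hΨ' : Ψ' k (a • q) = ∑ i ∈ Finset.range (k + 1), Ω i a • Ψ' (k - i) q)
    (hlow : ∀ j < k, Ψ j q = Ψ' j q) (h : Ψ k (a • q) = Ψ' k (a • q)) :
    a • Ψ k q = a • Ψ' k q := by
  rw [hΨ, hΨ', Finset.sum_range_succ', Finset.sum_range_succ', hΩ0, Nat.sub_zero] at h
  have hsum : ∑ i ∈ Finset.range k, Ω (i + 1) a • Ψ (k - (i + 1)) q =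
      ∑ i ∈ Finset.range k, Ω (i + 1) a • Ψ' (k - (i + 1)) q :=
    Finset.sum_congr rfl fun i hi => by
      rw [hlow _ (by simp only [Finset.mem_range] at hi; omega)]
  rwa [hsum, add_right_inj] at h

end

theorem stmt_17_general {A M Q : Type*} [Ring A] [AddCommGroup M] [Module A M]
    [AddCommGroup Q] [Module A Q] (n : ℕ)
    (ℒ : Set (Submodule A A))
    (hUp : ∀ I ∈ ℒ, ∀ J : Submodule A A, I ≤ J → J ∈ ℒ)
    (Ω : ℕ → A → A)
    (hΩ0 : ∀ a, Ω 0 a = a)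
    (Φ : M →ₗ[A] Q)
    (hQtf : ∀ q : Q, annIdeal A q ∈ ℒ → q = 0)
    (hcoker : ∀ q : Q,
      Submodule.comap (LinearMap.toSpanSingleton A Q q) (LinearMap.range Φ) ∈ ℒ)
    (D : ℕ → M → M)
    (Ψ Ψ' : ℕ → Q → Q)
    (hΨ : ∀ k ≤ n, ∀ (a : A) (q : Q),
      Ψ k (a • q) = ∑ i ∈ Finset.range (k + 1), Ω i a • Ψ (k - i) q)
    (hΨ' : ∀ k ≤ n, ∀ (a : A) (q : Q),
      Ψ' k (a • q) = ∑ i ∈ Finset.range (k + 1), Ω i a • Ψ' (k - i) q)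
    (hext : ∀ k ≤ n, ∀ m : M, Ψ k (Φ m) = Φ (D k m))
    (hext' : ∀ k ≤ n, ∀ m : M, Ψ' k (Φ m) = Φ (D k m)) :
    ∀ k ≤ n, Ψ k = Ψ' k := by
  intro k
  induction k using Nat.strong_induction_on with
  | _ k ih =>
    intro hk
    funext q
    refine eq_of_smul_eq_of_mem hUp hQtf (hcoker q) fun a ⟨m, hm⟩ => ?_
    rw [LinearMap.toSpanSingleton_apply] at hm
    refine smul_eq_smul_of_leibniz Ω (hΩ0 a) (hΨ k hk a q) (hΨ' k hk a q)
      (fun j hj => congrFun (ih j hj (hj.le.trans hk)) q) ?_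
    rw [← hm, hext k hk m, hext' k hk m]

/-- Uniqueness of the extension: if `M` is τ-torsion-free with localization `Φ : M → Q_τ(M)`
(τ-torsion-free target and τ-torsion cokernel), then two higher `Ω`-derivations of order `n`
on `Q_τ(M)` both extending a higher `Ω`-derivation `D` on `M` coincide. -/
theorem stmt_17 {A M Q : Type*} [Ring A] [AddCommGroup M] [Module A M]
    [AddCommGroup Q] [Module A Q] (n : ℕ)
    (ℒ : Set (Submodule A A))
    (hTop : (⊤ : Submodule A A) ∈ ℒ)
    (hUp : ∀ I ∈ ℒ, ∀ J : Submodule A A, I ≤ J → J ∈ ℒ)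
    (Ω : ℕ → A → A)
    (hΩadd : ∀ k a b, Ω k (a + b) = Ω k a + Ω k b)
    (hΩ0 : ∀ a, Ω 0 a = a)
    (hΩmul : ∀ k ≤ n, ∀ a b : A,
      Ω k (a * b) = ∑ i ∈ Finset.range (k + 1), Ω i a * Ω (k - i) b)
    (hMtf : ∀ m : M, annIdeal A m ∈ ℒ → m = 0)
    (Φ : M →ₗ[A] Q)
    (hQtf : ∀ q : Q, annIdeal A q ∈ ℒ → q = 0)
    (hcoker : ∀ q : Q,
      Submodule.comap (LinearMap.toSpanSingleton A Q q) (LinearMap.range Φ) ∈ ℒ)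
    (D : ℕ → M → M)
    (hDadd : ∀ k m m', D k (m + m') = D k m + D k m')
    (hD0 : ∀ m, D 0 m = m)
    (hD : ∀ k ≤ n, ∀ (a : A) (m : M),
      D k (a • m) = ∑ i ∈ Finset.range (k + 1), Ω i a • D (k - i) m)
    (Ψ Ψ' : ℕ → Q → Q)
    (hΨadd : ∀ k q q', Ψ k (q + q') = Ψ k q + Ψ k q')
    (hΨ'add : ∀ k q q', Ψ' k (q + q') = Ψ' k q + Ψ' k q')
    (hΨ0 : ∀ q, Ψ 0 q = q) (hΨ'0 : ∀ q, Ψ' 0 q = q)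
    (hΨ : ∀ k ≤ n, ∀ (a : A) (q : Q),
      Ψ k (a • q) = ∑ i ∈ Finset.range (k + 1), Ω i a • Ψ (k - i) q)
    (hΨ' : ∀ k ≤ n, ∀ (a : A) (q : Q),
      Ψ' k (a • q) = ∑ i ∈ Finset.range (k + 1), Ω i a • Ψ' (k - i) q)
    (hext : ∀ k ≤ n, ∀ m : M, Ψ k (Φ m) = Φ (D k m))
    (hext' : ∀ k ≤ n, ∀ m : M, Ψ' k (Φ m) = Φ (D k m)) :
    ∀ k ≤ n, Ψ k = Ψ' k :=
  stmt_17_general n ℒ hUp Ω hΩ0 Φ hQtf hcoker D Ψ Ψ' hΨ hΨ' hext hext'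
end
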